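/- arXiv:1303.1056 — 2 statements merged into one kernel-verified Lean document; each statement's English description precedes it below -/
import Mathlib

section
/- The vertical lift ^V X of a vector field X on M_n to the tangent bundle T(M_n) equipped with the synectic metric ^S g is a harmonic vector field on T(M_n) if and only if the 1-form on M_n associated with X via g is closed, i.e. ∇_j X_i − ∇_i X_j = 0 where X_i = g_{ih} X^h. -/
open scoped BigOperators

noncomputable section

namespace Synectic

variable {n : ℕ}

/-- Partial derivative `∂_j f` of a real-valued function on `ℝⁿ` (global chart of `M_n`). -/
def pd (f : (Fin n → ℝ) → ℝ) (j : Fin n) (x : Fin n → ℝ) : ℝ :=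
  fderiv ℝ f x (Pi.single j 1)

/-- Christoffel symbols `Γ^h_{ji}` of the metric `g` with inverse `ginv`. -/
def Christoffel (g ginv : (Fin n → ℝ) → Fin n → Fin n → ℝ) (h j i : Fin n)
    (x : Fin n → ℝ) : ℝ :=
  (1 / 2) * ∑ s, ginv x h s *
    (pd (fun z => g z s i) j x + pd (fun z => g z j s) i x - pd (fun z => g z j i) s x)

/-- Covariant derivative `∇_j X^h` of a vector field. -/
def covVec (g ginv : (Fin n → ℝ) → Fin n → Fin n → ℝ)
    (X : (Fin n → ℝ) → Fin n → ℝ) (j h : Fin n) (x : Fin n → ℝ) : ℝ :=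
  pd (fun z => X z h) j x + ∑ i, Christoffel g ginv h j i x * X x i

/-- Covariant derivative `∇_j ω_i` of a covector field. -/
def covCov (g ginv : (Fin n → ℝ) → Fin n → Fin n → ℝ)
    (ω : (Fin n → ℝ) → Fin n → ℝ) (j i : Fin n) (x : Fin n → ℝ) : ℝ :=
  pd (fun z => ω z i) j x - ∑ k, Christoffel g ginv k j i x * ω x k

/-- Covariant derivative `∇_s a_{ji}` of a `(0,2)`-tensor field. -/
def cov2 (g ginv : (Fin n → ℝ) → Fin n → Fin n → ℝ)
    (a : (Fin n → ℝ) → Fin n → Fin n → ℝ) (s j i : Fin n) (x : Fin n → ℝ) : ℝ :=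
  pd (fun z => a z j i) s x - ∑ l, Christoffel g ginv l s j x * a x l i
    - ∑ l, Christoffel g ginv l s i x * a x j l

/-- The tensor `H^h_{ji} = (1/2) g^{hs} (∇_j a_{si} + ∇_i a_{js} - ∇_s a_{ji})`. -/
def Hcoef (g ginv a : (Fin n → ℝ) → Fin n → Fin n → ℝ) (h j i : Fin n)
    (x : Fin n → ℝ) : ℝ :=
  (1 / 2) * ∑ s, ginv x h s *
    (cov2 g ginv a j s i x + cov2 g ginv a i j s x - cov2 g ginv a s j i x)

/-- Components `R_{kji}{}^h` of the Riemann curvature tensor of `g`. -/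
def Riem (g ginv : (Fin n → ℝ) → Fin n → Fin n → ℝ) (k j i h : Fin n)
    (x : Fin n → ℝ) : ℝ :=
  pd (fun z => Christoffel g ginv h j i z) k x - pd (fun z => Christoffel g ginv h k i z) j x
    + ∑ m, Christoffel g ginv m j i x * Christoffel g ginv h k m x
    - ∑ m, Christoffel g ginv m k i x * Christoffel g ginv h j m x

/-- The covector field `X_i = g_{ih} X^h` associated with a vector field `X`. -/
def lower (g : (Fin n → ℝ) → Fin n → Fin n → ℝ) (X : (Fin n → ℝ) → Fin n → ℝ)
    (x : Fin n → ℝ) (i : Fin n) : ℝ :=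
  ∑ h, g x i h * X x h

/-- A point of the tangent bundle `T(M_n)` in induced coordinates `(xʰ, yʰ)`. -/
abbrev TPt (n : ℕ) := (Fin n → ℝ) × (Fin n → ℝ)

/-- Index type for induced coordinates on `T(M_n)`: `inl` = base indices, `inr` = fibre indices. -/
abbrev Idx (n : ℕ) := Fin n ⊕ Fin n

/-- Coordinate directions on `T(M_n)`. -/
def eIdx : Idx n → TPt n
  | Sum.inl j => (Pi.single j 1, 0)
  | Sum.inr j => (0, Pi.single j 1)

/-- Partial derivative `∂_A f` on `T(M_n)` (`∂_j` for `A = inl j`, `∂_{j̄}` for `A = inr j`). -/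
def pdT (f : TPt n → ℝ) (A : Idx n) (p : TPt n) : ℝ :=
  fderiv ℝ f p (eIdx A)

/-- Covariant components of the synectic metric `^S g = ^C g + ^V a` on `T(M_n)`. -/
def synMetric (g a : (Fin n → ℝ) → Fin n → Fin n → ℝ) (p : TPt n) :
    Idx n → Idx n → ℝ
  | Sum.inl j, Sum.inl i => a p.1 j i + ∑ s, p.2 s * pd (fun z => g z j i) s p.1
  | Sum.inl j, Sum.inr i => g p.1 j i
  | Sum.inr j, Sum.inl i => g p.1 j i
  | Sum.inr _, Sum.inr _ => 0

/-- Contravariant components of the synectic metric. -/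
def synMetricInv (ginv a : (Fin n → ℝ) → Fin n → Fin n → ℝ) (p : TPt n) :
    Idx n → Idx n → ℝ
  | Sum.inl _, Sum.inl _ => 0
  | Sum.inl j, Sum.inr i => ginv p.1 j i
  | Sum.inr j, Sum.inl i => ginv p.1 j i
  | Sum.inr j, Sum.inr i =>
      ∑ s, p.2 s * pd (fun z => ginv z j i) s p.1
        - ∑ t, ∑ s, ginv p.1 j t * a p.1 t s * ginv p.1 s i

/-- Vertical lift `^V X` of a vector field, with components `(0, Xʰ)`. -/
def vlift (X : (Fin n → ℝ) → Fin n → ℝ) (p : TPt n) : Idx n → ℝ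
  | Sum.inl _ => 0
  | Sum.inr h => X p.1 h

/-- Complete lift `^C X` of a vector field, with components `(Xʰ, yˢ ∂_s Xʰ)`. -/
def clift (X : (Fin n → ℝ) → Fin n → ℝ) (p : TPt n) : Idx n → ℝ
  | Sum.inl h => X p.1 h
  | Sum.inr h => ∑ s, p.2 s * pd (fun z => X z h) s p.1

/-- Horizontal lift `^H X` of a vector field, with components `(Xʰ, -yˢ Γʰ_{si} Xⁱ)`. -/
def hlift (g ginv : (Fin n → ℝ) → Fin n → Fin n → ℝ)
    (X : (Fin n → ℝ) → Fin n → ℝ) (p : TPt n) : Idx n → ℝ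
  | Sum.inl h => X p.1 h
  | Sum.inr h => -∑ s, ∑ i, p.2 s * Christoffel g ginv h s i p.1 * X p.1 i

/-- Components of the Lie derivative `(𝓛_V G)_{AB}` of a metric `G` on `T(M_n)` along `V`. -/
def lieDerivT (G : TPt n → Idx n → Idx n → ℝ) (V : TPt n → Idx n → ℝ)
    (A B : Idx n) (p : TPt n) : ℝ :=
  ∑ C, (V p C * pdT (fun q => G q A B) C p
      + G p A C * pdT (fun q => V q C) B p
      + G p C B * pdT (fun q => V q C) A p)

/-- `V` is a Killing vector field of the metric `G` on `T(M_n)`. -/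
def IsKillingT (G : TPt n → Idx n → Idx n → ℝ) (V : TPt n → Idx n → ℝ) : Prop :=
  ∀ p A B, lieDerivT G V A B p = 0

/-- Christoffel symbols of a metric `G` (with inverse `Ginv`) on `T(M_n)`. -/
def ChristoffelT (G Ginv : TPt n → Idx n → Idx n → ℝ) (A B C : Idx n) (p : TPt n) : ℝ :=
  (1 / 2) * ∑ D, Ginv p A D *
    (pdT (fun q => G q D C) B p + pdT (fun q => G q B D) C p - pdT (fun q => G q B C) D p)

/-- Covariant derivative `∇_B ω_A` on `T(M_n)` of a covector field w.r.t. the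
Levi-Civita connection of `(G, Ginv)`. -/
def covCovT (G Ginv : TPt n → Idx n → Idx n → ℝ) (ω : TPt n → Idx n → ℝ)
    (B A : Idx n) (p : TPt n) : ℝ :=
  pdT (fun q => ω q A) B p - ∑ C, ChristoffelT G Ginv C B A p * ω p C

/-- Covariant derivative `∇_B V^A` on `T(M_n)` of a vector field w.r.t. a linear
connection given by its components `Conn^A_{BC}`. -/
def covVecT (Conn : Idx n → Idx n → Idx n → TPt n → ℝ) (V : TPt n → Idx n → ℝ)
    (B A : Idx n) (p : TPt n) : ℝ :=
  pdT (fun q => V q A) B p + ∑ C, Conn A B C p * V p C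

/-- Components `Γ̃^A_{BC}` of the metric connection `∇̃` of the synectic metric. -/
def GammaTilde (g ginv a : (Fin n → ℝ) → Fin n → Fin n → ℝ) :
    Idx n → Idx n → Idx n → TPt n → ℝ
  | Sum.inl h, Sum.inl j, Sum.inl i => fun p => Christoffel g ginv h j i p.1
  | Sum.inr h, Sum.inr j, Sum.inl i => fun p => Christoffel g ginv h j i p.1
  | Sum.inr h, Sum.inl j, Sum.inr i => fun p => Christoffel g ginv h j i p.1
  | Sum.inr h, Sum.inl j, Sum.inl i => fun p =>
      (∑ t, p.2 t * pd (fun z => Christoffel g ginv h j i z) t p.1)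
        + Hcoef g ginv a h j i p.1 - ∑ k, p.2 k * Riem g ginv k j i h p.1
  | _, _, _ => fun _ => 0

/-- Components `Γ̄^A_{BC}` of the metric connection `∇̄` of the complete lift metric `^C g`
(the horizontal lift `^H ∇` of the Levi-Civita connection of `g`). -/
def GammaBar (g ginv : (Fin n → ℝ) → Fin n → Fin n → ℝ) :
    Idx n → Idx n → Idx n → TPt n → ℝ
  | Sum.inl h, Sum.inl j, Sum.inl i => fun p => Christoffel g ginv h j i p.1
  | Sum.inr h, Sum.inr j, Sum.inl i => fun p => Christoffel g ginv h j i p.1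
  | Sum.inr h, Sum.inl j, Sum.inr i => fun p => Christoffel g ginv h j i p.1
  | Sum.inr h, Sum.inl j, Sum.inl i => fun p =>
      (∑ t, p.2 t * pd (fun z => Christoffel g ginv h j i z) t p.1)
        - ∑ k, p.2 k * Riem g ginv k j i h p.1
  | _, _, _ => fun _ => 0

/-- Vertical lift `^V H` of the `(1,2)`-tensor field `H`, as a difference of connections. -/
def vertH (g ginv a : (Fin n → ℝ) → Fin n → Fin n → ℝ) :
    Idx n → Idx n → Idx n → TPt n → ℝ
  | Sum.inr h, Sum.inl j, Sum.inl i => fun p => Hcoef g ginv a h j i p.1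
  | _, _, _ => fun _ => 0

/-- Covector field associated with a vector field `V` on `(T(M_n), ^S g)`. -/
def assocCov (g a : (Fin n → ℝ) → Fin n → Fin n → ℝ) (V : TPt n → Idx n → ℝ)
    (p : TPt n) (C : Idx n) : ℝ :=
  ∑ A, synMetric g a p C A * V p A

/-- The vertical vector field `ιC` with components `(0, yⁱ C_iᵏ)`. -/
def iotaT (C : (Fin n → ℝ) → Fin n → Fin n → ℝ) (p : TPt n) : Idx n → ℝ
  | Sum.inl _ => 0
  | Sum.inr k => ∑ i, p.2 i * C p.1 i k

/-- `X` is a Killing vector field of `(M_n, g)`: `∇_j X_i + ∇_i X_j = 0`. -/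
def IsKillingBase (g ginv : (Fin n → ℝ) → Fin n → Fin n → ℝ)
    (X : (Fin n → ℝ) → Fin n → ℝ) : Prop :=
  ∀ x j i, covCov g ginv (lower g X) j i x + covCov g ginv (lower g X) i j x = 0

/-- `V` is a harmonic vector field of `(T(M_n), ^S g)`: its associated covector field is
closed and coclosed w.r.t. the Levi-Civita connection of the synectic metric. -/
def IsHarmonicT (g ginv a : (Fin n → ℝ) → Fin n → Fin n → ℝ)
    (V : TPt n → Idx n → ℝ) : Prop :=
  (∀ p B A, covCovT (synMetric g a) (synMetricInv ginv a) (assocCov g a V) B A p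
      - covCovT (synMetric g a) (synMetricInv ginv a) (assocCov g a V) A B p = 0)
  ∧ (∀ p, ∑ B, ∑ A, synMetricInv ginv a p B A *
      covCovT (synMetric g a) (synMetricInv ginv a) (assocCov g a V) B A p = 0)

/-- `X` is a harmonic vector field of `(M_n, g)`: its associated `1`-form is closed and
coclosed. -/
def IsHarmonicBase (g ginv : (Fin n → ℝ) → Fin n → Fin n → ℝ)
    (X : (Fin n → ℝ) → Fin n → ℝ) : Prop :=
  (∀ x j i, covCov g ginv (lower g X) j i x - covCov g ginv (lower g X) i j x = 0)
  ∧ (∀ x, ∑ j, ∑ i, ginv x j i * covCov g ginv (lower g X) j i x = 0)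

/-- A vector field on `T(M_n)` is parallel w.r.t. a linear connection `Conn` if its covariant
derivative vanishes identically. -/
def IsParallelT (Conn : Idx n → Idx n → Idx n → TPt n → ℝ) (V : TPt n → Idx n → ℝ) : Prop :=
  ∀ p B A, covVecT Conn V B A p = 0

/-- `X` is parallel on `M_n`: `∇_j Xʰ = 0`. -/
def IsParallelBase (g ginv : (Fin n → ℝ) → Fin n → Fin n → ℝ)
    (X : (Fin n → ℝ) → Fin n → ℝ) : Prop :=
  ∀ x j h, covVec g ginv X j h x = 0

/-! ### Auxiliary lemmas for Statement 2 -/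

section Aux

variable {n : ℕ}

set_option linter.unusedSectionVars false

lemma contDiff_pd (f : (Fin n → ℝ) → ℝ) (hf : ContDiff ℝ (⊤ : ℕ∞) f) (t : Fin n) :
    ContDiff ℝ (⊤ : ℕ∞) (pd f t) := by
  unfold pd
  exact (hf.fderiv_right (by simp)).clm_apply contDiff_const

lemma pdT_const (c : ℝ) (A : Idx n) (p : TPt n) : pdT (fun _ => c) A p = 0 := by
  simp [pdT]

lemma pdT_fst_inl (f : (Fin n → ℝ) → ℝ) (p : TPt n) (hf : DifferentiableAt ℝ f p.1)
    (j : Fin n) : pdT (fun q : TPt n => f q.1) (Sum.inl j) p = pd f j p.1 := by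
  have h : HasFDerivAt (fun q : TPt n => f q.1)
      ((fderiv ℝ f p.1).comp (ContinuousLinearMap.fst ℝ (Fin n → ℝ) (Fin n → ℝ))) p :=
    hf.hasFDerivAt.comp p hasFDerivAt_fst
  simp [pdT, h.fderiv, eIdx, pd]

lemma pdT_fst_inr (f : (Fin n → ℝ) → ℝ) (p : TPt n) (hf : DifferentiableAt ℝ f p.1)
    (j : Fin n) : pdT (fun q : TPt n => f q.1) (Sum.inr j) p = 0 := by
  have h : HasFDerivAt (fun q : TPt n => f q.1)
      ((fderiv ℝ f p.1).comp (ContinuousLinearMap.fst ℝ (Fin n → ℝ) (Fin n → ℝ))) p :=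
    hf.hasFDerivAt.comp p hasFDerivAt_fst
  simp [pdT, h.fderiv, eIdx]

lemma pdT_affine_inr (f : (Fin n → ℝ) → ℝ) (h : Fin n → (Fin n → ℝ) → ℝ) (p : TPt n)
    (hf : DifferentiableAt ℝ f p.1) (hh : ∀ t, DifferentiableAt ℝ (h t) p.1) (s : Fin n) :
    pdT (fun q : TPt n => f q.1 + ∑ t, q.2 t * h t q.1) (Sum.inr s) p = h s p.1 := by
  have h1 : HasFDerivAt (fun q : TPt n => f q.1)
      ((fderiv ℝ f p.1).comp (ContinuousLinearMap.fst ℝ (Fin n → ℝ) (Fin n → ℝ))) p :=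
    hf.hasFDerivAt.comp p hasFDerivAt_fst
  have h2 : HasFDerivAt (fun q : TPt n => ∑ t, q.2 t * h t q.1)
      (∑ t, ((p.2 t) • ((fderiv ℝ (h t) p.1).comp
          (ContinuousLinearMap.fst ℝ (Fin n → ℝ) (Fin n → ℝ)))
        + (h t p.1) • ((((ContinuousLinearMap.proj t).comp
            (ContinuousLinearMap.snd ℝ (Fin n → ℝ) (Fin n → ℝ))) : TPt n →L[ℝ] ℝ)))) p := by
    apply HasFDerivAt.fun_sum
    intro t _
    exact ((((ContinuousLinearMap.proj t).comp
        (ContinuousLinearMap.snd ℝ (Fin n → ℝ) (Fin n → ℝ))) : TPt n →L[ℝ] ℝ).hasFDerivAt).mul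
      ((hh t).hasFDerivAt.comp p hasFDerivAt_fst)
  have h3 := h1.fun_add h2
  unfold pdT
  rw [h3.fderiv]
  simp [eIdx, Pi.single_apply, Finset.sum_ite_eq', mul_comm]

variable (g ginv a : (Fin n → ℝ) → Fin n → Fin n → ℝ) (X : (Fin n → ℝ) → Fin n → ℝ)

section WithHyp

variable (hg : ∀ j i, ContDiff ℝ (⊤ : ℕ∞) fun z => g z j i)
variable (ha : ∀ j i, ContDiff ℝ (⊤ : ℕ∞) fun z => a z j i)
variable (hX : ∀ h, ContDiff ℝ (⊤ : ℕ∞) fun z => X z h)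

include hg ha hX

/-- Differentiability of the lowered vector field. -/
lemma diff_lower (i : Fin n) : Differentiable ℝ (fun z => lower g X z i) := by
  unfold lower
  exact Differentiable.fun_sum fun h _ =>
    ((hg i h).differentiable (by simp)).mul ((hX h).differentiable (by simp))

/-- `pdT` of `synMetric (inr s) (inl i)` in a base direction. -/
lemma pdT_syn_rl_inl (p : TPt n) (s i j : Fin n) :
    pdT (fun q => synMetric g a q (Sum.inr s) (Sum.inl i)) (Sum.inl j) p
      = pd (fun z => g z s i) j p.1 :=
  pdT_fst_inl (fun z => g z s i) p ((hg s i).differentiable (by simp)).differentiableAt j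

lemma pdT_syn_rl_inr (p : TPt n) (s i j : Fin n) :
    pdT (fun q => synMetric g a q (Sum.inr s) (Sum.inl i)) (Sum.inr j) p = 0 :=
  pdT_fst_inr (fun z => g z s i) p ((hg s i).differentiable (by simp)).differentiableAt j

lemma pdT_syn_lr_inl (p : TPt n) (j s i : Fin n) :
    pdT (fun q => synMetric g a q (Sum.inl j) (Sum.inr s)) (Sum.inl i) p
      = pd (fun z => g z j s) i p.1 :=
  pdT_fst_inl (fun z => g z j s) p ((hg j s).differentiable (by simp)).differentiableAt i

lemma pdT_syn_lr_inr (p : TPt n) (j s i : Fin n) :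
    pdT (fun q => synMetric g a q (Sum.inl j) (Sum.inr s)) (Sum.inr i) p = 0 :=
  pdT_fst_inr (fun z => g z j s) p ((hg j s).differentiable (by simp)).differentiableAt i

lemma pdT_syn_rr (p : TPt n) (s i : Fin n) (A : Idx n) :
    pdT (fun q => synMetric g a q (Sum.inr s) (Sum.inr i)) A p = 0 :=
  pdT_const 0 A p

/-- `pdT` of `synMetric (inl j) (inl i)` in a fibre direction. -/
lemma pdT_syn_ll_inr (p : TPt n) (j i s : Fin n) :
    pdT (fun q => synMetric g a q (Sum.inl j) (Sum.inl i)) (Sum.inr s) p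
      = pd (fun z => g z j i) s p.1 :=
  pdT_affine_inr (fun z => a z j i) (fun t z => pd (fun z => g z j i) t z) p
    ((ha j i).differentiable (by simp)).differentiableAt
    (fun t => ((contDiff_pd _ (hg j i) t).differentiable (by simp)).differentiableAt) s

/-- The covector associated with the vertical lift: base components. -/
lemma assoc_inl (p : TPt n) (j : Fin n) :
    assocCov g a (vlift X) p (Sum.inl j) = lower g X p.1 j := by
  unfold assocCov
  rw [Fintype.sum_sum_type]
  simp [synMetric, vlift, lower]

/-- The covector associated with the vertical lift: fibre components vanish. -/
lemma assoc_inr (p : TPt n) (j : Fin n) :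
    assocCov g a (vlift X) p (Sum.inr j) = 0 := by
  unfold assocCov
  rw [Fintype.sum_sum_type]
  simp [synMetric, vlift]

lemma pdT_assoc_inl_inl (p : TPt n) (i j : Fin n) :
    pdT (fun q => assocCov g a (vlift X) q (Sum.inl i)) (Sum.inl j) p
      = pd (fun z => lower g X z i) j p.1 := by
  have e : (fun q : TPt n => assocCov g a (vlift X) q (Sum.inl i))
      = fun q : TPt n => lower g X q.1 i := funext fun q => assoc_inl g a X hg ha hX q i
  rw [show pdT (fun q => assocCov g a (vlift X) q (Sum.inl i)) (Sum.inl j) p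
      = pdT (fun q : TPt n => lower g X q.1 i) (Sum.inl j) p from by rw [e]]
  exact pdT_fst_inl (fun z => lower g X z i) p
    ((diff_lower g a X hg ha hX i) p.1) j

lemma pdT_assoc_inl_inr (p : TPt n) (i j : Fin n) :
    pdT (fun q => assocCov g a (vlift X) q (Sum.inl i)) (Sum.inr j) p = 0 := by
  have e : (fun q : TPt n => assocCov g a (vlift X) q (Sum.inl i))
      = fun q : TPt n => lower g X q.1 i := funext fun q => assoc_inl g a X hg ha hX q i
  rw [show pdT (fun q => assocCov g a (vlift X) q (Sum.inl i)) (Sum.inr j) p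
      = pdT (fun q : TPt n => lower g X q.1 i) (Sum.inr j) p from by rw [e]]
  exact pdT_fst_inr (fun z => lower g X z i) p ((diff_lower g a X hg ha hX i) p.1) j

lemma pdT_assoc_inr (p : TPt n) (i : Fin n) (B : Idx n) :
    pdT (fun q => assocCov g a (vlift X) q (Sum.inr i)) B p = 0 := by
  have e : (fun q : TPt n => assocCov g a (vlift X) q (Sum.inr i))
      = fun _ : TPt n => (0 : ℝ) := funext fun q => assoc_inr g a X hg ha hX q i
  rw [show pdT (fun q => assocCov g a (vlift X) q (Sum.inr i)) B p
      = pdT (fun _ : TPt n => (0 : ℝ)) B p from by rw [e]]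
  exact pdT_const 0 B p

/-- Christoffel symbols of the synectic metric with upper base index: `(inl j, inl i)`. -/
lemma GT_ll (p : TPt n) (k j i : Fin n) :
    ChristoffelT (synMetric g a) (synMetricInv ginv a) (Sum.inl k) (Sum.inl j) (Sum.inl i) p
      = Christoffel g ginv k j i p.1 := by
  unfold ChristoffelT
  rw [Fintype.sum_sum_type]
  simp only [synMetricInv, zero_mul, Finset.sum_const_zero, zero_add,
    pdT_syn_rl_inl g a X hg ha hX, pdT_syn_lr_inl g a X hg ha hX, pdT_syn_ll_inr g a X hg ha hX]
  rfl

lemma GT_lr (p : TPt n) (k j i : Fin n) :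
    ChristoffelT (synMetric g a) (synMetricInv ginv a) (Sum.inl k) (Sum.inl j) (Sum.inr i) p
      = 0 := by
  unfold ChristoffelT
  rw [Fintype.sum_sum_type]
  simp only [synMetricInv, zero_mul, Finset.sum_const_zero, zero_add,
    pdT_syn_rr g a X hg ha hX, pdT_syn_lr_inr g a X hg ha hX]
  simp

lemma GT_rl (p : TPt n) (k j i : Fin n) :
    ChristoffelT (synMetric g a) (synMetricInv ginv a) (Sum.inl k) (Sum.inr j) (Sum.inl i) p
      = 0 := by
  unfold ChristoffelT
  rw [Fintype.sum_sum_type]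
  simp only [synMetricInv, zero_mul, Finset.sum_const_zero, zero_add,
    pdT_syn_rr g a X hg ha hX, pdT_syn_rl_inr g a X hg ha hX]
  simp

lemma GT_rr (p : TPt n) (k j i : Fin n) :
    ChristoffelT (synMetric g a) (synMetricInv ginv a) (Sum.inl k) (Sum.inr j) (Sum.inr i) p
      = 0 := by
  unfold ChristoffelT
  rw [Fintype.sum_sum_type]
  simp only [synMetricInv, zero_mul, Finset.sum_const_zero, zero_add, pdT_syn_rr g a X hg ha hX]
  simp

/-- `covCovT` of the associated covector: `(inl, inl)` block. -/
lemma CC_ll (p : TPt n) (j i : Fin n) :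
    covCovT (synMetric g a) (synMetricInv ginv a) (assocCov g a (vlift X))
      (Sum.inl j) (Sum.inl i) p = covCov g ginv (lower g X) j i p.1 := by
  unfold covCovT
  rw [pdT_assoc_inl_inl g a X hg ha hX, Fintype.sum_sum_type]
  simp only [assoc_inl g a X hg ha hX, assoc_inr g a X hg ha hX, mul_zero,
    Finset.sum_const_zero, add_zero, GT_ll g ginv a X hg ha hX]
  rfl

lemma CC_lr (p : TPt n) (j i : Fin n) :
    covCovT (synMetric g a) (synMetricInv ginv a) (assocCov g a (vlift X))
      (Sum.inl j) (Sum.inr i) p = 0 := by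
  unfold covCovT
  rw [pdT_assoc_inr g a X hg ha hX, Fintype.sum_sum_type]
  simp [assoc_inl g a X hg ha hX, assoc_inr g a X hg ha hX, GT_lr g ginv a X hg ha hX]

lemma CC_rl (p : TPt n) (j i : Fin n) :
    covCovT (synMetric g a) (synMetricInv ginv a) (assocCov g a (vlift X))
      (Sum.inr j) (Sum.inl i) p = 0 := by
  unfold covCovT
  rw [pdT_assoc_inl_inr g a X hg ha hX, Fintype.sum_sum_type]
  simp [assoc_inl g a X hg ha hX, assoc_inr g a X hg ha hX, GT_rl g ginv a X hg ha hX]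

lemma CC_rr (p : TPt n) (j i : Fin n) :
    covCovT (synMetric g a) (synMetricInv ginv a) (assocCov g a (vlift X))
      (Sum.inr j) (Sum.inr i) p = 0 := by
  unfold covCovT
  rw [pdT_assoc_inr g a X hg ha hX, Fintype.sum_sum_type]
  simp [assoc_inl g a X hg ha hX, assoc_inr g a X hg ha hX, GT_rr g ginv a X hg ha hX]

end WithHyp

end Aux

/-- The vertical lift `^V X` is harmonic on `(T(M_n), ^S g)` iff the
`1`-form associated with `X` via `g` is closed: `∇_j X_i - ∇_i X_j = 0`. -/
theorem vertical_lift_harmonic_iff {n : ℕ}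
    (g ginv a : (Fin n → ℝ) → Fin n → Fin n → ℝ)
    (X : (Fin n → ℝ) → Fin n → ℝ)
    (hg : ∀ j i, ContDiff ℝ (⊤ : ℕ∞) fun z => g z j i)
    (hgsymm : ∀ x j i, g x j i = g x i j)
    (hpos : ∀ (x v : Fin n → ℝ), v ≠ 0 → 0 < ∑ j, ∑ i, g x j i * v j * v i)
    (hginv : ∀ j i, ContDiff ℝ (⊤ : ℕ∞) fun z => ginv z j i)
    (hinv : ∀ x j k, ∑ i, g x j i * ginv x i k = if j = k then (1 : ℝ) else 0)
    (ha : ∀ j i, ContDiff ℝ (⊤ : ℕ∞) fun z => a z j i)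
    (hasymm : ∀ x j i, a x j i = a x i j)
    (hX : ∀ h, ContDiff ℝ (⊤ : ℕ∞) fun z => X z h)
    : IsHarmonicT g ginv a (vlift X) ↔
      (∀ x j i, covCov g ginv (lower g X) j i x - covCov g ginv (lower g X) i j x = 0) := by
  constructor
  · intro H x j i
    have h1 := H.1 (x, fun _ => 0) (Sum.inl j) (Sum.inl i)
    rwa [CC_ll g ginv a X hg ha hX, CC_ll g ginv a X hg ha hX] at h1
  · intro hcl
    refine ⟨?_, ?_⟩
    · intro p B A
      cases B with
      | inl j =>
        cases A with
        | inl i =>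
          rw [CC_ll g ginv a X hg ha hX, CC_ll g ginv a X hg ha hX]
          exact hcl p.1 j i
        | inr i =>
          rw [CC_lr g ginv a X hg ha hX, CC_rl g ginv a X hg ha hX]
          ring
      | inr j =>
        cases A with
        | inl i =>
          rw [CC_rl g ginv a X hg ha hX, CC_lr g ginv a X hg ha hX]
          ring
        | inr i =>
          rw [CC_rr g ginv a X hg ha hX, CC_rr g ginv a X hg ha hX]
          ring
    · intro p
      simp only [Fintype.sum_sum_type]
      simp [synMetricInv, CC_lr g ginv a X hg ha hX, CC_rl g ginv a X hg ha hX,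
        CC_rr g ginv a X hg ha hX]

end Synectic
end
end

section
/- The horizontal lift ^H X of a vector field X on M_n is parallel on T(M_n) with respect to the metric connection ∇̃ of the synectic metric ^S g (i.e. ∇̃ ^H X = 0) if and only if X is parallel on M_n (∇X = 0) and H^h_{jm} X^m = 0, where H^h_{ji} = (1/2) g^{hs}(∇_j a_{si} + ∇_i a_{js} − ∇_s a_{ji}). -/
open scoped BigOperators

noncomputable section

namespace Synectic

variable {n : ℕ}

section Helpers

variable {n : ℕ}

lemma pd_contDiff {f : (Fin n → ℝ) → ℝ} (hf : ContDiff ℝ (⊤ : ℕ∞) f) (j : Fin n) :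
    ContDiff ℝ (⊤ : ℕ∞) (pd f j) :=
  (hf.fderiv_right (by simp)).clm_apply contDiff_const

lemma pd_mul {f g' : (Fin n → ℝ) → ℝ} {x : Fin n → ℝ} (hf : DifferentiableAt ℝ f x)
    (hg : DifferentiableAt ℝ g' x) (j : Fin n) :
    pd (fun z => f z * g' z) j x = pd f j x * g' x + f x * pd g' j x := by
  unfold pd
  rw [fderiv_fun_mul hf hg]
  simp [mul_comm]
  ring

lemma pd_sum {ι : Type*} (s : Finset ι) (F : ι → (Fin n → ℝ) → ℝ) {x : Fin n → ℝ}
    (hF : ∀ i ∈ s, DifferentiableAt ℝ (F i) x) (j : Fin n) :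
    pd (fun z => ∑ i ∈ s, F i z) j x = ∑ i ∈ s, pd (F i) j x := by
  unfold pd
  rw [fderiv_fun_sum hF]
  simp

lemma pdT_neg (f : TPt n → ℝ) (A : Idx n) (p : TPt n) :
    pdT (fun q => -f q) A p = -pdT f A p := by
  unfold pdT
  rw [fderiv_fun_neg]
  simp

lemma pdT_base_inl {F : (Fin n → ℝ) → ℝ} {p : TPt n} (hF : DifferentiableAt ℝ F p.1)
    (j : Fin n) : pdT (fun q : TPt n => F q.1) (Sum.inl j) p = pd F j p.1 := by
  have h : HasFDerivAt (fun q : TPt n => F q.1)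
      ((fderiv ℝ F p.1).comp (ContinuousLinearMap.fst ℝ (Fin n → ℝ) (Fin n → ℝ))) p :=
    hF.hasFDerivAt.comp p hasFDerivAt_fst
  unfold pdT
  rw [h.fderiv]
  simp [eIdx, pd]

lemma pdT_base_inr {F : (Fin n → ℝ) → ℝ} {p : TPt n} (hF : DifferentiableAt ℝ F p.1)
    (j : Fin n) : pdT (fun q : TPt n => F q.1) (Sum.inr j) p = 0 := by
  have h : HasFDerivAt (fun q : TPt n => F q.1)
      ((fderiv ℝ F p.1).comp (ContinuousLinearMap.fst ℝ (Fin n → ℝ) (Fin n → ℝ))) p :=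
    hF.hasFDerivAt.comp p hasFDerivAt_fst
  unfold pdT
  rw [h.fderiv]
  simp [eIdx]

lemma hasFDerivAt_fib {G : (Fin n → ℝ) → Fin n → ℝ} {p : TPt n}
    (hG : ∀ s, DifferentiableAt ℝ (fun z => G z s) p.1) :
    HasFDerivAt (fun q : TPt n => ∑ s, q.2 s * G q.1 s)
      (∑ s, (p.2 s • ((fderiv ℝ (fun z => G z s) p.1).comp
          (ContinuousLinearMap.fst ℝ (Fin n → ℝ) (Fin n → ℝ)))
        + G p.1 s • ((ContinuousLinearMap.proj s).comp
          (ContinuousLinearMap.snd ℝ (Fin n → ℝ) (Fin n → ℝ))))) p := by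
  apply HasFDerivAt.fun_sum
  intro s _
  have h1 : HasFDerivAt (fun q : TPt n => q.2 s)
      ((ContinuousLinearMap.proj s).comp
        (ContinuousLinearMap.snd ℝ (Fin n → ℝ) (Fin n → ℝ))) p :=
    ((ContinuousLinearMap.proj s).comp
        (ContinuousLinearMap.snd ℝ (Fin n → ℝ) (Fin n → ℝ))).hasFDerivAt
  have h2 : HasFDerivAt (fun q : TPt n => G q.1 s)
      ((fderiv ℝ (fun z => G z s) p.1).comp
        (ContinuousLinearMap.fst ℝ (Fin n → ℝ) (Fin n → ℝ))) p :=
    (hG s).hasFDerivAt.comp p hasFDerivAt_fst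
  exact h1.mul h2

lemma pdT_fib_inl {G : (Fin n → ℝ) → Fin n → ℝ} {p : TPt n}
    (hG : ∀ s, DifferentiableAt ℝ (fun z => G z s) p.1) (j : Fin n) :
    pdT (fun q : TPt n => ∑ s, q.2 s * G q.1 s) (Sum.inl j) p
      = ∑ s, p.2 s * pd (fun z => G z s) j p.1 := by
  unfold pdT
  rw [(hasFDerivAt_fib hG).fderiv]
  simp [eIdx, pd]

lemma pdT_fib_inr {G : (Fin n → ℝ) → Fin n → ℝ} {p : TPt n}
    (hG : ∀ s, DifferentiableAt ℝ (fun z => G z s) p.1) (j : Fin n) :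
    pdT (fun q : TPt n => ∑ s, q.2 s * G q.1 s) (Sum.inr j) p = G p.1 j := by
  unfold pdT
  rw [(hasFDerivAt_fib hG).fderiv]
  simp [eIdx, Pi.single_apply]

end Helpers


lemma star_algebra {n : ℕ} (y Xv Hc dX : Fin n → ℝ) (C Q : Fin n → Fin n → Fin n → ℝ)
    (j h : Fin n) :
    -∑ s, y s * ∑ i, (Q s i j * Xv i + C h s i * dX i)
      + (∑ i, ((∑ t, y t * Q j i t) + Hc i
            - ∑ k, y k * (Q j i k - Q k i j + ∑ m, C m j i * C h k m - ∑ m, C m k i * C h j m)) * Xv i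
        + ∑ i, C h j i * -∑ s, ∑ m, y s * C i s m * Xv m)
    = -∑ s, ∑ m, y s * C h s m * (dX m + ∑ i, C m j i * Xv i) + ∑ i, Hc i * Xv i := by
  simp only [sub_mul, add_mul, Finset.sum_mul, mul_sub, mul_add, Finset.mul_sum,
    Finset.sum_add_distrib, Finset.sum_sub_distrib, mul_neg, neg_mul,
    Finset.sum_neg_distrib, neg_add, neg_neg, neg_sub, mul_assoc]
  have h1 : ∑ x : Fin n, ∑ i : Fin n, y x * (Q x i j * Xv i)
      = ∑ x : Fin n, ∑ x1 : Fin n, y x1 * (Q x1 x j * Xv x) := Finset.sum_comm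
  have h2 : ∑ x : Fin n, ∑ x1 : Fin n, ∑ x2 : Fin n, y x1 * (C x2 j x * (C h x1 x2 * Xv x))
      = ∑ x : Fin n, ∑ x1 : Fin n, ∑ x2 : Fin n, y x * (C h x x1 * (C x1 j x2 * Xv x2)) := by
    calc ∑ x : Fin n, ∑ x1 : Fin n, ∑ x2 : Fin n, y x1 * (C x2 j x * (C h x1 x2 * Xv x))
        = ∑ k : Fin n, ∑ m : Fin n, ∑ i : Fin n, y k * (C m j i * (C h k m * Xv i)) := by
          rw [Finset.sum_comm]
          exact Finset.sum_congr rfl fun k _ => Finset.sum_comm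
      _ = _ := Finset.sum_congr rfl fun k _ => Finset.sum_congr rfl fun m _ =>
          Finset.sum_congr rfl fun i _ => by ring
  have h3 : ∑ x : Fin n, ∑ x1 : Fin n, ∑ x2 : Fin n, y x1 * (C x2 x1 x * (C h j x2 * Xv x))
      = ∑ x : Fin n, ∑ x1 : Fin n, ∑ i : Fin n, C h j x * (y x1 * (C x x1 i * Xv i)) := by
    calc ∑ x : Fin n, ∑ x1 : Fin n, ∑ x2 : Fin n, y x1 * (C x2 x1 x * (C h j x2 * Xv x))
        = ∑ k : Fin n, ∑ m : Fin n, ∑ i : Fin n, y k * (C m k i * (C h j m * Xv i)) := by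
          rw [Finset.sum_comm]
          exact Finset.sum_congr rfl fun k _ => Finset.sum_comm
      _ = ∑ m : Fin n, ∑ k : Fin n, ∑ i : Fin n, y k * (C m k i * (C h j m * Xv i)) :=
          Finset.sum_comm
      _ = _ := Finset.sum_congr rfl fun m _ => Finset.sum_congr rfl fun k _ =>
          Finset.sum_congr rfl fun i _ => by ring
  linear_combination -h1 - h2 + h3

section Cases

set_option linter.unusedSectionVars false

variable {n : ℕ} {g ginv a : (Fin n → ℝ) → Fin n → Fin n → ℝ}
  {X : (Fin n → ℝ) → Fin n → ℝ}

lemma christoffel_contDiff (hg : ∀ j i, ContDiff ℝ (⊤ : ℕ∞) fun z => g z j i)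
    (hginv : ∀ j i, ContDiff ℝ (⊤ : ℕ∞) fun z => ginv z j i) (h j i : Fin n) :
    ContDiff ℝ (⊤ : ℕ∞) (fun x => Christoffel g ginv h j i x) := by
  unfold Christoffel
  exact contDiff_const.mul (ContDiff.sum fun s _ => (hginv h s).mul
    (((pd_contDiff (hg s i) j).add (pd_contDiff (hg j s) i)).sub (pd_contDiff (hg j i) s)))

lemma case_ll (hX : ∀ h, ContDiff ℝ (⊤ : ℕ∞) fun z => X z h) (p : TPt n) (j h : Fin n) :
    covVecT (GammaTilde g ginv a) (hlift g ginv X) (Sum.inl j) (Sum.inl h) p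
      = covVec g ginv X j h p.1 := by
  unfold covVecT
  have h1 : (fun q : TPt n => hlift g ginv X q (Sum.inl h)) = fun q => X q.1 h := rfl
  rw [h1, pdT_base_inl ((hX h).differentiable (by simp) p.1) j]
  rw [Fintype.sum_sum_type]
  simp [GammaTilde, hlift, covVec]

lemma case_rl (hX : ∀ h, ContDiff ℝ (⊤ : ℕ∞) fun z => X z h) (p : TPt n) (j h : Fin n) :
    covVecT (GammaTilde g ginv a) (hlift g ginv X) (Sum.inr j) (Sum.inl h) p = 0 := by
  unfold covVecT
  have h1 : (fun q : TPt n => hlift g ginv X q (Sum.inl h)) = fun q => X q.1 h := rfl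
  rw [h1, pdT_base_inr ((hX h).differentiable (by simp) p.1) j]
  rw [Fintype.sum_sum_type]
  simp [GammaTilde]

lemma hlift_inr_eq (h : Fin n) :
    (fun q : TPt n => hlift g ginv X q (Sum.inr h))
      = fun q => -∑ s, q.2 s * (∑ i, Christoffel g ginv h s i q.1 * X q.1 i) := by
  funext q
  show -∑ s, ∑ i, q.2 s * Christoffel g ginv h s i q.1 * X q.1 i = _
  simp [Finset.mul_sum, mul_assoc]

lemma diffG (hg : ∀ j i, ContDiff ℝ (⊤ : ℕ∞) fun z => g z j i)
    (hginv : ∀ j i, ContDiff ℝ (⊤ : ℕ∞) fun z => ginv z j i)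
    (hX : ∀ h, ContDiff ℝ (⊤ : ℕ∞) fun z => X z h) (x : Fin n → ℝ) (h s : Fin n) :
    DifferentiableAt ℝ (fun z => ∑ i, Christoffel g ginv h s i z * X z i) x :=
  (ContDiff.sum fun i _ => (christoffel_contDiff hg hginv h s i).mul
    (hX i)).differentiable (by simp) x

lemma case_rr (hg : ∀ j i, ContDiff ℝ (⊤ : ℕ∞) fun z => g z j i)
    (hginv : ∀ j i, ContDiff ℝ (⊤ : ℕ∞) fun z => ginv z j i)
    (hX : ∀ h, ContDiff ℝ (⊤ : ℕ∞) fun z => X z h) (p : TPt n) (j h : Fin n) :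
    covVecT (GammaTilde g ginv a) (hlift g ginv X) (Sum.inr j) (Sum.inr h) p = 0 := by
  unfold covVecT
  rw [hlift_inr_eq]
  have h2 : pdT (fun q : TPt n =>
      -∑ s, q.2 s * (∑ i, Christoffel g ginv h s i q.1 * X q.1 i)) (Sum.inr j) p
      = -(∑ i, Christoffel g ginv h j i p.1 * X p.1 i) := by
    rw [pdT_neg, pdT_fib_inr (fun s => diffG hg hginv hX p.1 h s) j]
  rw [h2, Fintype.sum_sum_type]
  simp [GammaTilde, hlift]

lemma case_lr (hg : ∀ j i, ContDiff ℝ (⊤ : ℕ∞) fun z => g z j i)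
    (hginv : ∀ j i, ContDiff ℝ (⊤ : ℕ∞) fun z => ginv z j i)
    (hX : ∀ h, ContDiff ℝ (⊤ : ℕ∞) fun z => X z h) (p : TPt n) (j h : Fin n) :
    covVecT (GammaTilde g ginv a) (hlift g ginv X) (Sum.inl j) (Sum.inr h) p
      = -(∑ s, ∑ m, p.2 s * Christoffel g ginv h s m p.1 * covVec g ginv X j m p.1)
        + ∑ i, Hcoef g ginv a h j i p.1 * X p.1 i := by
  unfold covVecT
  rw [hlift_inr_eq]
  have h2 : pdT (fun q : TPt n =>
      -∑ s, q.2 s * (∑ i, Christoffel g ginv h s i q.1 * X q.1 i)) (Sum.inl j) p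
      = -∑ s, p.2 s * (∑ i, (pd (fun z => Christoffel g ginv h s i z) j p.1 * X p.1 i
          + Christoffel g ginv h s i p.1 * pd (fun z => X z i) j p.1)) := by
    rw [pdT_neg, pdT_fib_inl (fun s => diffG hg hginv hX p.1 h s) j]
    congr 1
    apply Finset.sum_congr rfl
    intro s _
    congr 1
    rw [pd_sum Finset.univ _ (fun i _ =>
      ((christoffel_contDiff hg hginv h s i).mul (hX i)).differentiable (by simp) p.1) j]
    exact Finset.sum_congr rfl fun i _ =>
      pd_mul ((christoffel_contDiff hg hginv h s i).differentiable (by simp) p.1)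
        ((hX i).differentiable (by simp) p.1) j
  rw [h2, Fintype.sum_sum_type]
  have h3 : ∑ i, GammaTilde g ginv a (Sum.inr h) (Sum.inl j) (Sum.inl i) p
        * hlift g ginv X p (Sum.inl i)
      = ∑ i, ((∑ t, p.2 t * pd (fun z => Christoffel g ginv h j i z) t p.1)
          + Hcoef g ginv a h j i p.1 - ∑ k, p.2 k * Riem g ginv k j i h p.1) * X p.1 i := rfl
  have h4 : ∑ i, GammaTilde g ginv a (Sum.inr h) (Sum.inl j) (Sum.inr i) p
        * hlift g ginv X p (Sum.inr i)
      = ∑ i, Christoffel g ginv h j i p.1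
          * (-∑ s, ∑ m, p.2 s * Christoffel g ginv i s m p.1 * X p.1 m) := rfl
  rw [h3, h4]
  simp only [Riem, covVec]
  exact star_algebra p.2 (fun i => X p.1 i) (fun i => Hcoef g ginv a h j i p.1)
    (fun i => pd (fun z => X z i) j p.1)
    (fun a b c => Christoffel g ginv a b c p.1)
    (fun s i t => pd (fun z => Christoffel g ginv h s i z) t p.1) j h

end Cases

/-- The horizontal lift `^H X` is parallel on `T(M_n)` w.r.t. the metric
connection `∇̃` of the synectic metric iff `X` is parallel on `M_n` and `Hʰ_{jm} Xᵐ = 0`. -/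
theorem horizontal_lift_parallel_iff {n : ℕ}
    (g ginv a : (Fin n → ℝ) → Fin n → Fin n → ℝ)
    (X : (Fin n → ℝ) → Fin n → ℝ)
    (hg : ∀ j i, ContDiff ℝ (⊤ : ℕ∞) fun z => g z j i)
    (hgsymm : ∀ x j i, g x j i = g x i j)
    (hpos : ∀ (x v : Fin n → ℝ), v ≠ 0 → 0 < ∑ j, ∑ i, g x j i * v j * v i)
    (hginv : ∀ j i, ContDiff ℝ (⊤ : ℕ∞) fun z => ginv z j i)
    (hinv : ∀ x j k, ∑ i, g x j i * ginv x i k = if j = k then (1 : ℝ) else 0)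
    (ha : ∀ j i, ContDiff ℝ (⊤ : ℕ∞) fun z => a z j i)
    (hasymm : ∀ x j i, a x j i = a x i j)
    (hX : ∀ h, ContDiff ℝ (⊤ : ℕ∞) fun z => X z h)
    : IsParallelT (GammaTilde g ginv a) (hlift g ginv X) ↔
      (IsParallelBase g ginv X ∧ (∀ x j h, ∑ m, Hcoef g ginv a h j m x * X x m = 0)) := by
  constructor
  · intro hP
    have hpar : IsParallelBase g ginv X := by
      intro x j h
      have h0 := hP (x, 0) (Sum.inl j) (Sum.inl h)
      rwa [case_ll hX] at h0
    refine ⟨hpar, ?_⟩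
    intro x j h
    have h0 := hP (x, 0) (Sum.inl j) (Sum.inr h)
    rw [case_lr hg hginv hX] at h0
    simpa using h0
  · rintro ⟨hpar, hH⟩
    intro p B A
    match B, A with
    | Sum.inl j, Sum.inl h =>
      rw [case_ll hX]; exact hpar p.1 j h
    | Sum.inl j, Sum.inr h =>
      rw [case_lr hg hginv hX]
      have hpar' : ∀ x j h, covVec g ginv X j h x = 0 := hpar
      simp [hpar', hH p.1 j h]
    | Sum.inr j, Sum.inl h => exact case_rl hX p j h
    | Sum.inr j, Sum.inr h => exact case_rr hg hginv hX p j h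

end Synectic
end
end
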